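/- Fix ε > 0 such that max(2dε, 10ε) < 1, and let G be a d-layer ReLU network satisfying the R2WDC with constant ε. Then for every x ∈ ℝ^k: ‖G(x)‖² ≤ ((1 + 4εd)/2^d) ‖x‖². -/
import Mathlib


open scoped BigOperators
open Real MeasureTheory ProbabilityTheory Filter
open scoped Matrix

noncomputable section

namespace R2WDCFormal

/-- Euclidean inner product on `Fin n → ℝ`. -/
def dotp {n : ℕ} (r s : Fin n → ℝ) : ℝ := ∑ i, r i * s i

/-- Euclidean norm on `Fin n → ℝ`. -/
def vnorm {n : ℕ} (r : Fin n → ℝ) : ℝ := Real.sqrt (dotp r r)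

/-- Angle between two vectors. -/
def ang {n : ℕ} (r s : Fin n → ℝ) : ℝ := Real.arccos (dotp r s / (vnorm r * vnorm s))

/-- Outer product of two vectors, as a matrix. -/
def outer {n : ℕ} (u v : Fin n → ℝ) : Matrix (Fin n) (Fin n) ℝ := Matrix.of fun i j => u i * v j

/-- The matrix sending `r̂ ↦ ŝ`, `ŝ ↦ r̂` with kernel `span{r,s}ᗮ`. -/
def Mswap {n : ℕ} (r s : Fin n → ℝ) : Matrix (Fin n) (Fin n) ℝ :=
  outer ((vnorm ((vnorm r)⁻¹ • r + (vnorm s)⁻¹ • s))⁻¹ • ((vnorm r)⁻¹ • r + (vnorm s)⁻¹ • s))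
        ((vnorm ((vnorm r)⁻¹ • r + (vnorm s)⁻¹ • s))⁻¹ • ((vnorm r)⁻¹ • r + (vnorm s)⁻¹ • s)) -
  outer ((vnorm ((vnorm r)⁻¹ • r - (vnorm s)⁻¹ • s))⁻¹ • ((vnorm r)⁻¹ • r - (vnorm s)⁻¹ • s))
        ((vnorm ((vnorm r)⁻¹ • r - (vnorm s)⁻¹ • s))⁻¹ • ((vnorm r)⁻¹ • r - (vnorm s)⁻¹ • s))

/-- The matrix `Q_{r,s}`. -/
def Qmat {n : ℕ} (r s : Fin n → ℝ) : Matrix (Fin n) (Fin n) ℝ :=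
  if r = 0 ∨ s = 0 then 0
  else ((π - ang r s) / (2 * π)) • (1 : Matrix (Fin n) (Fin n) ℝ) +
    (Real.sin (ang r s) / (2 * π)) • Mswap r s

/-- `W_{+,x} = diag(Wx > 0) W`. -/
def Wplus {m n : ℕ} (W : Matrix (Fin m) (Fin n) ℝ) (x : Fin n → ℝ) : Matrix (Fin m) (Fin n) ℝ :=
  Matrix.of fun i j => if 0 < W.mulVec x i then W i j else 0

/-- Entrywise ReLU. -/
def reluVec {n : ℕ} (v : Fin n → ℝ) : Fin n → ℝ := fun i => max (v i) 0

/-- Sub-network `G_j` of the ReLU network with layer sizes `nn` and weights `W`. -/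
def subnet (nn : ℕ → ℕ) (W : ∀ i : ℕ, Matrix (Fin (nn (i + 1))) (Fin (nn i)) ℝ) :
    ∀ j : ℕ, (Fin (nn 0) → ℝ) → Fin (nn j) → ℝ
  | 0, x => x
  | j + 1, x => reluVec ((W j).mulVec (subnet nn W j x))

/-- `Λ_{j,x} = W_{j,+,x} ⋯ W_{1,+,x}`. -/
def LambdaMat (nn : ℕ → ℕ) (W : ∀ i : ℕ, Matrix (Fin (nn (i + 1))) (Fin (nn i)) ℝ) :
    ∀ j : ℕ, (Fin (nn 0) → ℝ) → Matrix (Fin (nn j)) (Fin (nn 0)) ℝ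
  | 0, _ => 1
  | j + 1, x => Wplus (W j) (subnet nn W j x) * LambdaMat nn W j x

/-- Range Restricted Weight Distribution Condition with constant `ε` of a `d`-layer network. -/
def R2WDCond (nn : ℕ → ℕ) (d : ℕ)
    (W : ∀ i : ℕ, Matrix (Fin (nn (i + 1))) (Fin (nn i)) ℝ) (ε : ℝ) : Prop :=
  ∀ i < d, ∀ x y x₁ x₂ x₃ x₄ : Fin (nn 0) → ℝ,
    |dotp (((Wplus (W i) (subnet nn W i x))ᵀ * Wplus (W i) (subnet nn W i y) -
        Qmat (subnet nn W i x) (subnet nn W i y)).mulVec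
        (subnet nn W i x₁ - subnet nn W i x₂)) (subnet nn W i x₃ - subnet nn W i x₄)| ≤
      ε * vnorm (subnet nn W i x₁ - subnet nn W i x₂) * vnorm (subnet nn W i x₃ - subnet nn W i x₄)

/-- Range Restricted Isometry Condition of `A` with respect to the network, with constant `ε`. -/
def RRICond (nn : ℕ → ℕ) (d : ℕ)
    (W : ∀ i : ℕ, Matrix (Fin (nn (i + 1))) (Fin (nn i)) ℝ) {mm : ℕ}
    (A : Matrix (Fin mm) (Fin (nn d)) ℝ) (ε : ℝ) : Prop :=
  ∀ x₁ x₂ x₃ x₄ : Fin (nn 0) → ℝ,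
    |dotp ((Aᵀ * A - 1).mulVec (subnet nn W d x₁ - subnet nn W d x₂))
        (subnet nn W d x₃ - subnet nn W d x₄)| ≤
      ε * vnorm (subnet nn W d x₁ - subnet nn W d x₂) * vnorm (subnet nn W d x₃ - subnet nn W d x₄)

/-- The angle-distortion function `g`. -/
def gAngle (θ : ℝ) : ℝ := Real.arccos (((π - θ) * Real.cos θ + Real.sin θ) / π)

/-- The deterministic vector field `h̃_{x,y}`. -/
def htilde {k : ℕ} (d : ℕ) (x y : Fin k → ℝ) : Fin k → ℝ :=
  (1 / 2 ^ d : ℝ) • ((∏ i ∈ Finset.range d, (π - gAngle^[i] (ang x y)) / π) • y +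
    (∑ i ∈ Finset.Ico 1 d, Real.sin (gAngle^[i] (ang x y)) / π *
      ∏ j ∈ Finset.Ico (i + 1) d, (π - gAngle^[j] (ang x y)) / π) •
      (vnorm y • (vnorm x)⁻¹ • x))

/-- Spectral (ℓ²-operator) norm of a matrix. -/
def specNorm {a b : ℕ} (M : Matrix (Fin a) (Fin b) ℝ) : ℝ :=
  ⨆ v : {v : Fin b → ℝ // vnorm v ≤ 1}, vnorm (M.mulVec v)

/-- The entries of the random matrix `W` are i.i.d. `N(0, v)`. -/
def IIDGaussian {Ω : Type*} [MeasurableSpace Ω] (μ : Measure Ω) {a b : ℕ}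
    (W : Ω → Fin a → Fin b → ℝ) (v : NNReal) : Prop :=
  Measure.map W μ = Measure.pi fun _ : Fin a => Measure.pi fun _ : Fin b => gaussianReal 0 v

/-- The noise factor `ω`. -/
def omegaNoise (nn : ℕ → ℕ) (d mm : ℕ) : ℝ :=
  2 / 2 ^ ((d : ℝ) / 2) * Real.sqrt (13 / 12) *
    Real.sqrt ((nn 0 : ℝ) / mm * Real.log (5 * ∏ j ∈ Finset.Icc 1 d, Real.exp 1 * nn j / nn 0))

/-- Clarke subdifferential of `f` at `x`: the convex hull of all limits of gradients of `f`
at nearby differentiability points. -/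
def clarkeSubdiff {k : ℕ} (f : (Fin k → ℝ) → ℝ) (x : Fin k → ℝ) : Set (Fin k → ℝ) :=
  convexHull ℝ {v : Fin k → ℝ | ∃ u : ℕ → Fin k → ℝ,
    (∀ t, DifferentiableAt ℝ f (u t)) ∧
    Tendsto u atTop (nhds x) ∧
    Tendsto (fun t => fun i => fderiv ℝ f (u t) (Pi.single i 1)) atTop (nhds v)}

/-- The compressed sensing objective `f_cs`. -/
def fcs (nn : ℕ → ℕ) (d : ℕ) (W : ∀ i : ℕ, Matrix (Fin (nn (i + 1))) (Fin (nn i)) ℝ)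
    {mm : ℕ} (A : Matrix (Fin mm) (Fin (nn d)) ℝ) (b : Fin mm → ℝ)
    (x : Fin (nn 0) → ℝ) : ℝ :=
  1 / 2 * vnorm (b - A.mulVec (subnet nn W d x)) ^ 2

lemma dotp_self_nonneg {n : ℕ} (v : Fin n → ℝ) : 0 ≤ dotp v v :=
  Finset.sum_nonneg fun i _ => mul_self_nonneg _

lemma vnorm_sq {n : ℕ} (v : Fin n → ℝ) : vnorm v ^ 2 = dotp v v :=
  Real.sq_sqrt (dotp_self_nonneg v)

lemma dotp_self_pos {n : ℕ} (v : Fin n → ℝ) (hv : v ≠ 0) : 0 < dotp v v := by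
  rcases (dotp_self_nonneg v).lt_or_eq with h | h
  · exact h
  · exfalso
    apply hv
    funext i
    have := (Finset.sum_eq_zero_iff_of_nonneg (fun i _ => mul_self_nonneg (v i))).1 h.symm
    have hi := this i (Finset.mem_univ i)
    have := mul_self_eq_zero.1 hi
    simpa using this

lemma subnet_zero (nn : ℕ → ℕ) (W : ∀ i : ℕ, Matrix (Fin (nn (i + 1))) (Fin (nn i)) ℝ) :
    ∀ j : ℕ, subnet nn W j (0 : Fin (nn 0) → ℝ) = 0 := by
  intro j
  induction j with
  | zero => rfl
  | succ j ih =>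
      show reluVec ((W j).mulVec (subnet nn W j 0)) = 0
      rw [ih, Matrix.mulVec_zero]
      funext i
      simp [reluVec]

lemma wplus_mulVec {m n : ℕ} (M : Matrix (Fin m) (Fin n) ℝ) (v : Fin n → ℝ) :
    (Wplus M v).mulVec v = reluVec (M.mulVec v) := by
  funext i
  show (∑ j, (if 0 < M.mulVec v i then M i j else 0) * v j) = max (M.mulVec v i) 0
  by_cases h : 0 < M.mulVec v i
  · simp only [h, if_true, max_eq_left h.le]
    rfl
  · simp only [h, if_false, zero_mul, Finset.sum_const_zero]
    rw [max_eq_right (not_lt.1 h)]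

lemma Qmat_self {n : ℕ} (v : Fin n → ℝ) (hv : v ≠ 0) :
    Qmat v v = (1 / 2 : ℝ) • (1 : Matrix (Fin n) (Fin n) ℝ) := by
  have hd : dotp v v ≠ 0 := (dotp_self_pos v hv).ne'
  have hvn : vnorm v * vnorm v = dotp v v := Real.mul_self_sqrt (dotp_self_nonneg v)
  have hang : ang v v = 0 := by
    rw [ang, hvn, div_self hd, Real.arccos_one]
  rw [Qmat, if_neg (by simp [hv]), hang]
  rw [Real.sin_zero, zero_div, zero_smul, add_zero, sub_zero]
  congr 1
  field_simp

lemma dotp_transpose_mul {m n : ℕ} (P : Matrix (Fin m) (Fin n) ℝ) (v : Fin n → ℝ) :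
    dotp ((Pᵀ * P).mulVec v) v = dotp (P.mulVec v) (P.mulVec v) := by
  show dotProduct ((Pᵀ * P).mulVec v) v = dotProduct (P.mulVec v) (P.mulVec v)
  rw [← Matrix.mulVec_mulVec, Matrix.mulVec_transpose, ← Matrix.dotProduct_mulVec]

lemma dotp_sub_mulVec {n : ℕ} (A B : Matrix (Fin n) (Fin n) ℝ) (v w : Fin n → ℝ) :
    dotp ((A - B).mulVec v) w = dotp (A.mulVec v) w - dotp (B.mulVec v) w := by
  show dotProduct ((A - B).mulVec v) w = _
  rw [Matrix.sub_mulVec, sub_dotProduct]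
  rfl

lemma pow_one_add_le (ε : ℝ) (hε : 0 ≤ ε) :
    ∀ j : ℕ, 2 * ε * j ≤ 1 → (1 + 2 * ε) ^ j ≤ 1 + 2 * ε * j + (2 * ε * j) ^ 2 := by
  intro j
  induction j with
  | zero => intro _; norm_num
  | succ j ih =>
      intro h
      have hjc : (0 : ℝ) ≤ (j : ℝ) := Nat.cast_nonneg j
      have hcast : ((j + 1 : ℕ) : ℝ) = (j : ℝ) + 1 := by push_cast; ring
      rw [hcast] at h ⊢
      have hj : 2 * ε * j ≤ 1 := by nlinarith
      have ih' := ih hj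
      have hpos : (0 : ℝ) ≤ 1 + 2 * ε := by linarith
      have key : (1 + 2 * ε) ^ j * (1 + 2 * ε) ≤
          (1 + 2 * ε * j + (2 * ε * j) ^ 2) * (1 + 2 * ε) :=
        mul_le_mul_of_nonneg_right ih' hpos
      rw [← pow_succ] at key
      have hq : 0 ≤ ε * ε * (j : ℝ) * (1 - 2 * ε * j) :=
        mul_nonneg (mul_nonneg (mul_nonneg hε hε) hjc) (by linarith)
      nlinarith [key, hq, mul_nonneg hε hε]

theorem statement12 (nn : ℕ → ℕ) (d : ℕ)
    (W : ∀ i : ℕ, Matrix (Fin (nn (i + 1))) (Fin (nn i)) ℝ) (ε : ℝ)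
    (hε : 0 < ε) (hεd : 2 * (d : ℝ) * ε < 1) (hε10 : 10 * ε < 1)
    (hG : R2WDCond nn d W ε) :
    ∀ x : Fin (nn 0) → ℝ,
      vnorm (subnet nn W d x) ^ 2 ≤ (1 + 4 * ε * d) / 2 ^ d * vnorm x ^ 2 := by
  intro x
  have hhalf : (0 : ℝ) ≤ 1 / 2 + ε := by linarith
  have step : ∀ j, j < d →
      vnorm (subnet nn W (j + 1) x) ^ 2 ≤ (1 / 2 + ε) * vnorm (subnet nn W j x) ^ 2 := by
    intro j hj
    set v := subnet nn W j x with hv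
    have hnext : subnet nn W (j + 1) x = (Wplus (W j) v).mulVec v := by
      show reluVec ((W j).mulVec v) = _
      rw [wplus_mulVec]
    by_cases h0 : v = 0
    · rw [hnext, h0, Matrix.mulVec_zero]
      have : vnorm (0 : Fin (nn (j + 1)) → ℝ) = 0 := by
        simp [vnorm, dotp]
      rw [this]
      have : (0 : ℝ) ≤ vnorm v ^ 2 := sq_nonneg _
      nlinarith
    · have hR := hG j hj x x x 0 x 0
      rw [subnet_zero nn W j, sub_zero] at hR
      rw [← hv] at hR
      set P := Wplus (W j) v with hP
      have hQ : Qmat v v = (1 / 2 : ℝ) • (1 : Matrix (Fin (nn j)) (Fin (nn j)) ℝ) :=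
        Qmat_self v h0
      have hsplit : dotp ((Pᵀ * P).mulVec v) v =
          dotp (((Pᵀ * P - Qmat v v)).mulVec v) v + dotp ((Qmat v v).mulVec v) v := by
        rw [dotp_sub_mulVec]; ring
      have hQv : dotp ((Qmat v v).mulVec v) v = 1 / 2 * dotp v v := by
        rw [hQ, Matrix.smul_mulVec, Matrix.one_mulVec]
        show dotProduct ((1 / 2 : ℝ) • v) v = _
        rw [smul_dotProduct]
        rfl
      have hbound : dotp (((Pᵀ * P - Qmat v v)).mulVec v) v ≤ ε * vnorm v * vnorm v :=
        le_trans (le_abs_self _) hR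
      have hfin : vnorm (subnet nn W (j + 1) x) ^ 2 = dotp ((Pᵀ * P).mulVec v) v := by
        rw [hnext, vnorm_sq]
        exact (dotp_transpose_mul P v).symm
      have hnn : vnorm v * vnorm v = vnorm v ^ 2 := by ring
      rw [hfin, hsplit, hQv, ← vnorm_sq]
      nlinarith [hbound]
  have main : ∀ j, j ≤ d →
      vnorm (subnet nn W j x) ^ 2 ≤ (1 / 2 + ε) ^ j * vnorm x ^ 2 := by
    intro j
    induction j with
    | zero => intro _; simp [subnet]
    | succ j ih =>
        intro hj
        have h1 := step j (by omega)
        have h2 := ih (by omega)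
        calc vnorm (subnet nn W (j + 1) x) ^ 2
            ≤ (1 / 2 + ε) * vnorm (subnet nn W j x) ^ 2 := h1
          _ ≤ (1 / 2 + ε) * ((1 / 2 + ε) ^ j * vnorm x ^ 2) :=
              mul_le_mul_of_nonneg_left h2 hhalf
          _ = (1 / 2 + ε) ^ (j + 1) * vnorm x ^ 2 := by ring
  have hmd := main d le_rfl
  have hεd' : 2 * ε * (d : ℝ) ≤ 1 := by nlinarith
  have hpoly : (1 + 2 * ε) ^ d ≤ 1 + 4 * ε * d := by
    have := pow_one_add_le ε hε.le d hεd'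
    nlinarith [this, sq_nonneg (2 * ε * (d : ℝ)), mul_nonneg (mul_nonneg (by norm_num : (0:ℝ) ≤ 2) hε.le) (Nat.cast_nonneg d : (0:ℝ) ≤ (d:ℝ))]
  have heq : ((1 : ℝ) / 2 + ε) ^ d = (1 + 2 * ε) ^ d / 2 ^ d := by
    rw [show (1 / 2 + ε : ℝ) = (1 + 2 * ε) / 2 by ring, div_pow]
  have h2d : (0 : ℝ) < 2 ^ d := by positivity
  have hfinal : ((1 : ℝ) / 2 + ε) ^ d ≤ (1 + 4 * ε * d) / 2 ^ d := by
    rw [heq]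
    exact div_le_div_of_nonneg_right hpoly h2d.le
  calc vnorm (subnet nn W d x) ^ 2
      ≤ (1 / 2 + ε) ^ d * vnorm x ^ 2 := hmd
    _ ≤ (1 + 4 * ε * d) / 2 ^ d * vnorm x ^ 2 :=
        mul_le_mul_of_nonneg_right hfinal (sq_nonneg _)
end R2WDCFormal
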